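/- arXiv:2306.11362 — 2 statements merged into one kernel-verified Lean document; each statement's English description precedes it below -/
import Mathlib

section
/- Let A be an algebra (over a field of characteristic zero) with a bilinear product satisfying w_d(a_1,...,a_d) = 0 for all a_1,...,a_d, where w_d is the sum of all distinct bracketings of the ordered word a_1···a_d. Then the symmetrized product a∘b = ab + ba satisfies the identity t_d = 0, where t_d(a_1,...,a_d) is the sum of all distinct multilinear monomials of degree d in the commutative magma generated by ∘. -/
/-- `wb f fuel l`: fuel-based recursion computing the sum of all bracketings of the
ordered word given by `l`, using the binary operation `f`. -/
def wb {A : Type*} [AddCommMonoid A] (f : A → A → A) : ℕ → List A → A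
  | 0, _ => 0
  | _ + 1, [a] => a
  | fuel + 1, l =>
      ∑ i ∈ Finset.range (l.length - 1),
        f (wb f fuel (l.take (i + 1))) (wb f fuel (l.drop (i + 1)))

/-- `Wb f [a₁,…,aₙ] = wₙ(a₁,…,aₙ)`, the sum of all bracketings of the ordered word
`a₁⋯aₙ`; it satisfies `w₁(a)=a` and `wₙ = Σ_{i=1}^{n-1} wᵢ·w_{n-i}`. -/
def Wb {A : Type*} [AddCommMonoid A] (f : A → A → A) (l : List A) : A :=
  wb f l.length l

/-- `tb f fuel l`: fuel-based recursion computing the sum of all distinct multilinear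
monomials on the entries of `l` for a commutative binary operation `f`:
`tₙ = Σ_{I⊔J={1,…,n}, 1∈I, I,J≠∅} t_{|I|}(a_I)·t_{|J|}(a_J)`. -/
def tb {A : Type*} [AddCommMonoid A] (f : A → A → A) : ℕ → List A → A
  | 0, _ => 0
  | _ + 1, [a] => a
  | fuel + 1, l =>
      ∑ I ∈ (Finset.range l.length).powerset.filter
          (fun I => 0 ∈ I ∧ I ≠ Finset.range l.length),
        f (tb f fuel ((I.sort (· ≤ ·)).map (fun i => l.getD i 0)))
          (tb f fuel ((((Finset.range l.length) \ I).sort (· ≤ ·)).map (fun i => l.getD i 0)))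

/-- `Tb f [a₁,…,aₙ] = tₙ(a₁,…,aₙ)`, the sum of all distinct multilinear degree-`n`
monomials for the commutative product `f`. -/
def Tb {A : Type*} [AddCommMonoid A] (f : A → A → A) (l : List A) : A :=
  tb f l.length l

/-!
Split each bracketing of `w_n(a_{σ 1}, …, a_{σ n})` at its root. A permutation `σ` together with
a split point `k` is the same datum as the set `I = σ {1, …, k}` together with an ordering of `I`
and an ordering of its complement, so `Σ_σ w_n(a_σ) = Σ_{∅ ≠ I ≠ [n]} W(I) W(Iᶜ)`, where `W(I)`
sums `w` over all orderings of the `a_i`, `i ∈ I`. Pairing `I` with `Iᶜ` rewrites this as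
`Σ_{1 ∈ I ≠ [n]} W(I) ∘ W(Iᶜ)`, which is the recursion for `t_n`; by induction `W(I) = t(a_I)`.
Hence `Σ_σ w_n(a_σ) = t_n(a_1, …, a_n)`, and `w_d = 0` forces `t_d = 0`.
-/

section Recursion

variable {A : Type*} [AddCommMonoid A] (f : A → A → A)

theorem wb_succ_of_length_le {fuel : ℕ} {l : List A} (hl : l.length ≤ fuel) :
    wb f (fuel + 1) l = wb f fuel l := by
  induction fuel generalizing l with
  | zero => rw [List.length_eq_zero_iff.1 (Nat.le_zero.1 hl)]; rfl
  | succ fuel ih =>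
    match l with
    | [] => rfl
    | [_] => rfl
    | a :: b :: t =>
      refine Finset.sum_congr rfl fun i hi => ?_
      simp only [Finset.mem_range, List.length_cons] at hi hl
      rw [ih (by simp only [List.length_take, List.length_cons]; omega),
        ih (by simp only [List.length_drop, List.length_cons]; omega)]

theorem wb_eq_Wb {fuel : ℕ} {l : List A} (hl : l.length ≤ fuel) : wb f fuel l = Wb f l := by
  induction fuel, hl using Nat.le_induction with
  | base => rfl
  | succ fuel hl ih => rw [wb_succ_of_length_le f hl, ih]

theorem Wb_eq_sum {l : List A} (hl : 2 ≤ l.length) :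
    Wb f l = ∑ i ∈ Finset.range (l.length - 1),
      f (Wb f (l.take (i + 1))) (Wb f (l.drop (i + 1))) := by
  match l, hl with
  | a :: b :: t, _ =>
    show (∑ i ∈ Finset.range ((a :: b :: t).length - 1), _ : A) = _
    refine Finset.sum_congr rfl fun i hi => ?_
    simp only [Finset.mem_range, List.length_cons] at hi
    rw [wb_eq_Wb f (by simp only [List.length_take, List.length_cons]; omega),
      wb_eq_Wb f (by simp only [List.length_drop, List.length_cons]; omega)]

theorem card_lt_of_mem_filter_powerset_range {n : ℕ} {I : Finset ℕ}
    (hI : I ∈ (Finset.range n).powerset.filter (fun I => 0 ∈ I ∧ I ≠ Finset.range n)) :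
    I.card < n ∧ (Finset.range n \ I).card < n := by
  simp only [Finset.mem_filter, Finset.mem_powerset] at hI
  obtain ⟨hsub, h0, hne⟩ := hI
  have hlt := Finset.card_lt_card (Finset.ssubset_iff_subset_ne.2 ⟨hsub, hne⟩)
  have hpos := Finset.card_pos.2 ⟨0, h0⟩
  rw [Finset.card_range] at hlt
  rw [Finset.card_sdiff_of_subset hsub, Finset.card_range]
  omega

theorem tb_succ_of_length_le {fuel : ℕ} {l : List A} (hl : l.length ≤ fuel) :
    tb f (fuel + 1) l = tb f fuel l := by
  induction fuel generalizing l with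
  | zero => rw [List.length_eq_zero_iff.1 (Nat.le_zero.1 hl)]; rfl
  | succ fuel ih =>
    match l with
    | [] => rfl
    | [_] => rfl
    | a :: b :: t =>
      refine Finset.sum_congr rfl fun I hI => ?_
      have hcard := card_lt_of_mem_filter_powerset_range hI
      rw [ih (by rw [List.length_map, Finset.length_sort]; omega),
        ih (by rw [List.length_map, Finset.length_sort]; omega)]

theorem tb_eq_Tb {fuel : ℕ} {l : List A} (hl : l.length ≤ fuel) : tb f fuel l = Tb f l := by
  induction fuel, hl using Nat.le_induction with
  | base => rfl
  | succ fuel hl ih => rw [tb_succ_of_length_le f hl, ih]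

theorem Tb_eq_sum {l : List A} (hl : 2 ≤ l.length) :
    Tb f l = ∑ I ∈ (Finset.range l.length).powerset.filter
        (fun I => 0 ∈ I ∧ I ≠ Finset.range l.length),
      f (Tb f ((I.sort (· ≤ ·)).map (fun i => l.getD i 0)))
        (Tb f (((Finset.range l.length \ I).sort (· ≤ ·)).map (fun i => l.getD i 0))) := by
  match l, hl with
  | a :: b :: t, _ =>
    show (∑ I ∈ (Finset.range (a :: b :: t).length).powerset.filter
      (fun I => 0 ∈ I ∧ I ≠ Finset.range (a :: b :: t).length), _ : A) = _
    refine Finset.sum_congr rfl fun I hI => ?_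
    have hcard := card_lt_of_mem_filter_powerset_range hI
    simp only [List.length_cons] at hcard ⊢
    rw [tb_eq_Tb f (by rw [List.length_map, Finset.length_sort]; omega),
      tb_eq_Tb f (by rw [List.length_map, Finset.length_sort]; omega)]

theorem Finset.orderEmbOfFin_map_valEmbedding {n : ℕ} (J : Finset (Fin n)) :
    (J.map Fin.valEmbedding).orderEmbOfFin (Finset.card_map _) =
      fun i => (J.orderEmbOfFin rfl i : ℕ) :=
  (Finset.orderEmbOfFin_unique _ (fun i => Finset.mem_map_of_mem _ (J.orderEmbOfFin_mem rfl i))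
    (Fin.val_strictMono.comp (J.orderEmbOfFin rfl).strictMono)).symm

theorem map_getD_sort_map_valEmbedding {n : ℕ} (w : Fin n → A) (J : Finset (Fin n)) :
    ((J.map Fin.valEmbedding).sort (· ≤ ·)).map (fun i => (List.ofFn w).getD i 0) =
      List.ofFn (w ∘ J.orderEmbOfFin rfl) := by
  rw [← Finset.listMap_orderEmbOfFin_finRange _ (Finset.card_map _),
    Finset.orderEmbOfFin_map_valEmbedding, List.map_map, List.ofFn_eq_map (f := w ∘ _)]
  refine List.map_congr_left fun i _ => ?_
  simp

theorem Tb_ofFn {n : ℕ} (w : Fin (n + 2) → A) :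
    Tb f (List.ofFn w) =
      ∑ J ∈ Finset.univ.filter (fun J : Finset (Fin (n + 2)) => 0 ∈ J ∧ J ≠ Finset.univ),
        f (Tb f (List.ofFn (w ∘ J.orderEmbOfFin rfl)))
          (Tb f (List.ofFn (w ∘ Jᶜ.orderEmbOfFin rfl))) := by
  rw [Tb_eq_sum f (by simp), List.length_ofFn, ← Nat.Iio_eq_range]
  symm
  refine Finset.sum_nbij' (fun J => J.map Fin.valEmbedding)
    (fun I => Finset.univ.filter (fun x : Fin (n + 2) => (x : ℕ) ∈ I)) ?_ ?_ ?_ ?_ ?_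
  · intro J hJ
    simp only [Finset.mem_filter, Finset.mem_univ, true_and] at hJ
    rw [← Fin.map_valEmbedding_univ, Finset.mem_filter, Finset.mem_powerset, Ne, Finset.map_inj]
    exact ⟨Finset.map_subset_map.2 J.subset_univ, Finset.mem_map_of_mem _ hJ.1, hJ.2⟩
  · intro I hI
    simp only [Finset.mem_filter, Finset.mem_powerset, Finset.mem_univ, true_and] at hI ⊢
    obtain ⟨hsub, h0, hne⟩ := hI
    refine ⟨h0, fun huniv => hne (subset_antisymm hsub fun x hx => ?_)⟩
    have hx' := Finset.mem_univ (⟨x, Finset.mem_Iio.1 hx⟩ : Fin (n + 2))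
    rw [← huniv, Finset.mem_filter] at hx'
    exact hx'.2
  · intro J _
    ext
    simp [Fin.val_inj]
  · intro I hI
    simp only [Finset.mem_filter, Finset.mem_powerset] at hI
    ext x
    simp only [Finset.mem_map, Finset.mem_filter, Finset.mem_univ, true_and, Fin.valEmbedding_apply]
    exact ⟨fun ⟨a, ha, hax⟩ => hax ▸ ha, fun hx => ⟨⟨x, Finset.mem_Iio.1 (hI.1 hx)⟩, hx, rfl⟩⟩
  · intro J _
    rw [← Fin.map_valEmbedding_univ, ← Finset.map_sdiff, ← Finset.compl_eq_univ_sdiff,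
      map_getD_sort_map_valEmbedding, map_getD_sort_map_valEmbedding]

end Recursion

section Split

variable {ι κ α : Type*} [Fintype α] [DecidableEq α]

def Equiv.sumCongrCompl (I : Finset α) (e₁ : ι ≃ I) (e₂ : κ ≃ ↥Iᶜ) : ι ⊕ κ ≃ α :=
  (e₁.sumCongr (e₂.trans (Equiv.subtypeEquivRight fun _ => Finset.mem_compl))).trans
    (Equiv.sumCompl (· ∈ I))

theorem Equiv.range_sumCongrCompl_inl (I : Finset α) (e₁ : ι ≃ I) (e₂ : κ ≃ ↥Iᶜ) :
    Set.range (Equiv.sumCongrCompl I e₁ e₂ ∘ Sum.inl) = I := by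
  ext a
  simp only [Set.mem_range, Function.comp_apply, Finset.mem_coe]
  exact ⟨fun ⟨i, hi⟩ => hi ▸ (e₁ i).2,
    fun ha => ⟨e₁.symm ⟨a, ha⟩, by simp [Equiv.sumCongrCompl]⟩⟩

theorem Equiv.sumCongrCompl_bijective :
    Function.Bijective fun x : Σ I : Finset α, (ι ≃ I) × (κ ≃ ↥Iᶜ) =>
      Equiv.sumCongrCompl x.1 x.2.1 x.2.2 := by
  refine ⟨?_, fun e => ?_⟩
  · rintro ⟨I, e₁, e₂⟩ ⟨I', e₁', e₂'⟩ h
    obtain rfl : I = I' := by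
      rw [← Finset.coe_inj, ← Equiv.range_sumCongrCompl_inl I e₁ e₂,
        ← Equiv.range_sumCongrCompl_inl I' e₁' e₂']
      exact congrArg (fun g : ι ⊕ κ ≃ α => Set.range (g ∘ Sum.inl)) h
    have h₁ : e₁ = e₁' := Equiv.ext fun i => Subtype.ext (congrArg (· (Sum.inl i)) h :)
    have h₂ : e₂ = e₂' := Equiv.ext fun j => Subtype.ext (congrArg (· (Sum.inr j)) h :)
    rw [h₁, h₂]
  · let I : Finset α := Finset.univ.filter fun a => (e.symm a).isLeft
    have hinl : ∀ i, e (Sum.inl i) ∈ I := by simp [I]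
    have hinr : ∀ j, e (Sum.inr j) ∈ Iᶜ := by simp [I]
    let e₁ : ι ≃ I := Equiv.ofBijective (fun i => ⟨e (Sum.inl i), hinl i⟩)
      ⟨fun i i' h => by simpa using h, fun ⟨a, ha⟩ => by
        obtain ⟨i | j, rfl⟩ := e.surjective a
        · exact ⟨i, rfl⟩
        · exact absurd ha (Finset.mem_compl.1 (hinr j))⟩
    let e₂ : κ ≃ ↥Iᶜ := Equiv.ofBijective (fun j => ⟨e (Sum.inr j), hinr j⟩)
      ⟨fun j j' h => by simpa using h, fun ⟨a, ha⟩ => by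
        obtain ⟨i | j, rfl⟩ := e.surjective a
        · exact absurd (hinl i) (Finset.mem_compl.1 ha)
        · exact ⟨j, rfl⟩⟩
    refine ⟨⟨I, e₁, e₂⟩, Equiv.ext ?_⟩
    rintro (i | j) <;> rfl

theorem Equiv.sum_sumEquiv_eq_sum_finset [Fintype ι] [DecidableEq ι] [Fintype κ]
    [DecidableEq κ] {M : Type*} [AddCommMonoid M] (F : (ι → α) → (κ → α) → M) :
    ∑ e : ι ⊕ κ ≃ α, F (e ∘ Sum.inl) (e ∘ Sum.inr) =
      ∑ I : Finset α, ∑ e₁ : ι ≃ I, ∑ e₂ : κ ≃ ↥Iᶜ, F (Subtype.val ∘ e₁) (Subtype.val ∘ e₂) :=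
  calc _ = ∑ x : Σ I : Finset α, (ι ≃ I) × (κ ≃ ↥Iᶜ),
        F (Subtype.val ∘ x.2.1) (Subtype.val ∘ x.2.2) :=
      (Fintype.sum_bijective _ Equiv.sumCongrCompl_bijective _ _ fun _ => rfl).symm
    _ = _ := by simp only [Fintype.sum_sigma, Fintype.sum_prod_type]

theorem Finset.sum_filter_mem_add_compl {M : Type*} [AddCommMonoid M] (a : α)
    (g : Finset α → M) :
    ∑ I ∈ Finset.univ.filter (fun I => a ∈ I ∧ I ≠ Finset.univ), (g I + g Iᶜ) =
      ∑ I ∈ Finset.univ.filter (fun I => I ≠ ∅ ∧ I ≠ Finset.univ), g I := by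
  rw [Finset.sum_add_distrib]
  conv_rhs => rw [← Finset.sum_filter_add_sum_filter_not _ (fun I : Finset α => a ∈ I),
    Finset.filter_filter, Finset.filter_filter]
  congr 1
  · refine Finset.sum_congr (Finset.filter_congr fun I _ => ?_) fun _ _ => rfl
    exact ⟨fun ⟨ha, hI⟩ => ⟨⟨Finset.ne_empty_of_mem ha, hI⟩, ha⟩, fun ⟨⟨_, hI⟩, ha⟩ => ⟨ha, hI⟩⟩
  · refine Finset.sum_nbij' (·ᶜ) (·ᶜ) (fun I hI => ?_) (fun I hI => ?_) (fun I _ => compl_compl I)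
      (fun I _ => compl_compl I) fun _ _ => rfl
    · simp only [Finset.mem_filter, Finset.mem_univ, true_and] at hI ⊢
      simp [hI.1, hI.2, Finset.ne_empty_of_mem hI.1]
    · simp only [Finset.mem_filter, Finset.mem_univ, true_and] at hI ⊢
      simp [hI.2, hI.1.1]

theorem sum_range_ite_card_eq_succ {M : Type*} [AddCommMonoid M] (I : Finset α) (a : M) :
    ∑ i ∈ Finset.range (Fintype.card α - 1), (if I.card = i + 1 then a else 0) =
      if I ≠ ∅ ∧ I ≠ Finset.univ then a else 0 := by
  rcases I.eq_empty_or_nonempty with rfl | hI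
  · simp
  have hpos := hI.card_pos
  have hle := I.card_le_univ
  simp_rw [show ∀ i, I.card = i + 1 ↔ I.card - 1 = i by omega]
  rw [Finset.sum_ite_eq]
  refine if_congr ?_ rfl rfl
  rw [Finset.mem_range, Ne, Ne, ← Finset.card_eq_iff_eq_univ]
  simp only [hI.ne_empty, not_false_eq_true, true_and]
  omega

theorem Finset.map_compl_equiv {β : Type*} [Fintype β] [DecidableEq β] (e : β ≃ α)
    (J : Finset β) : Jᶜ.map e.toEmbedding = (J.map e.toEmbedding)ᶜ := by
  rw [Finset.compl_eq_univ_sdiff, Finset.compl_eq_univ_sdiff, Finset.map_sdiff,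
    Finset.map_univ_equiv]

theorem Equiv.sum_filter_mem_map {β M : Type*} [Fintype β] [DecidableEq β] [AddCommMonoid M]
    (e : β ≃ α) (a : β) (g : Finset α → Finset α → M) :
    ∑ I ∈ Finset.univ.filter (fun I => e a ∈ I ∧ I ≠ Finset.univ), g I Iᶜ =
      ∑ J ∈ Finset.univ.filter (fun J => a ∈ J ∧ J ≠ Finset.univ),
        g (J.map e.toEmbedding) (Jᶜ.map e.toEmbedding) := by
  symm
  refine Finset.sum_equiv e.finsetCongr (fun J => ?_) (fun J _ => ?_)
  · simp only [Equiv.finsetCongr_apply, Finset.mem_filter, Finset.mem_univ, true_and,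
      Finset.mem_map_equiv, Equiv.symm_apply_apply]
    rw [Ne, Ne, ← Finset.map_univ_equiv e, Finset.map_inj]
  · rw [Equiv.finsetCongr_apply, Finset.map_compl_equiv]

end Split

section Take

variable {β : Type*} {k n : ℕ}

def finSumFinEquivOfLE (hk : k ≤ n) : Fin k ⊕ Fin (n - k) ≃ Fin n :=
  finSumFinEquiv.trans (finCongr (Nat.add_sub_cancel' hk))

theorem take_ofFn_eq_ofFn_inl (hk : k ≤ n) (g : Fin n → β) :
    (List.ofFn g).take k = List.ofFn (g ∘ finSumFinEquivOfLE hk ∘ Sum.inl) := by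
  refine List.ext_getElem (by simp [hk]) fun i _ _ => ?_
  simp [finSumFinEquivOfLE]

theorem drop_ofFn_eq_ofFn_inr (hk : k ≤ n) (g : Fin n → β) :
    (List.ofFn g).drop k = List.ofFn (g ∘ finSumFinEquivOfLE hk ∘ Sum.inr) := by
  refine List.ext_getElem (by simp) fun i _ _ => ?_
  simp [finSumFinEquivOfLE]

theorem sum_take_drop_eq_sum_finset {α M : Type*} [Fintype α] [DecidableEq α] [AddCommMonoid M]
    (v : α → β) (F : List β → List β → M) (hk : k ≤ n) :
    ∑ e : Fin n ≃ α, F ((List.ofFn (v ∘ e)).take k) ((List.ofFn (v ∘ e)).drop k) =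
      ∑ I : Finset α, ∑ e₁ : Fin k ≃ I, ∑ e₂ : Fin (n - k) ≃ ↥Iᶜ,
        F (List.ofFn (v ∘ Subtype.val ∘ e₁)) (List.ofFn (v ∘ Subtype.val ∘ e₂)) := by
  rw [← Equiv.sum_sumEquiv_eq_sum_finset fun p q => F (List.ofFn (v ∘ p)) (List.ofFn (v ∘ q))]
  refine Fintype.sum_equiv ((finSumFinEquivOfLE hk).symm.equivCongr (Equiv.refl α)) _ _
    fun e => ?_
  rw [take_ofFn_eq_ofFn_inl hk, drop_ofFn_eq_ofFn_inr hk]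
  rfl

end Take

section Symmetrization

variable {A : Type*} [NonUnitalNonAssocSemiring A] {α : Type*} [Fintype α] [DecidableEq α]

/-- `n` is not tied to `Fintype.card α`: when they differ the sum is empty, hence `0`. -/
def symmWb (v : α → A) (n : ℕ) : A :=
  ∑ e : Fin n ≃ α, Wb (· * ·) (List.ofFn (v ∘ e))

def symmWbOn (v : α → A) (I : Finset α) : A :=
  symmWb (fun x : I => v x) I.card

theorem symmWb_eq_zero_of_card_ne {v : α → A} {n : ℕ} (h : Fintype.card α ≠ n) :
    symmWb v n = 0 := by
  have : IsEmpty (Fin n ≃ α) := ⟨fun e => h (by simpa using (Fintype.card_congr e).symm)⟩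
  simp [symmWb]

theorem symmWb_mul_symmWb_compl (v : α → A) (I : Finset α) {k : ℕ} :
    symmWb (fun x : I => v x) k * symmWb (fun x : ↥Iᶜ => v x) (Fintype.card α - k) =
      if I.card = k then symmWbOn v I * symmWbOn v Iᶜ else 0 := by
  split_ifs with h
  · subst h
    rw [symmWbOn, symmWbOn, Finset.card_compl]
  · rw [symmWb_eq_zero_of_card_ne (by simpa using h), zero_mul]

theorem symmWb_eq_sum_mul (v : α → A) (hα : 2 ≤ Fintype.card α) :
    symmWb v (Fintype.card α) =
      ∑ I ∈ Finset.univ.filter (fun I : Finset α => I ≠ ∅ ∧ I ≠ Finset.univ),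
        symmWbOn v I * symmWbOn v Iᶜ := by
  calc symmWb v (Fintype.card α)
      = ∑ i ∈ Finset.range (Fintype.card α - 1), ∑ e : Fin (Fintype.card α) ≃ α,
          Wb (· * ·) ((List.ofFn (v ∘ e)).take (i + 1)) *
            Wb (· * ·) ((List.ofFn (v ∘ e)).drop (i + 1)) := by
        conv_rhs => rw [Finset.sum_comm]
        refine Finset.sum_congr rfl fun e _ => ?_
        rw [Wb_eq_sum _ (by simpa using hα), List.length_ofFn]
    _ = ∑ I : Finset α, ∑ i ∈ Finset.range (Fintype.card α - 1),
          if I.card = i + 1 then symmWbOn v I * symmWbOn v Iᶜ else 0 := by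
        conv_rhs => rw [Finset.sum_comm]
        refine Finset.sum_congr rfl fun i hi => ?_
        rw [sum_take_drop_eq_sum_finset v (fun p q => Wb (· * ·) p * Wb (· * ·) q)
          (by have := Finset.mem_range.1 hi; omega)]
        refine Finset.sum_congr rfl fun I _ => ?_
        rw [← symmWb_mul_symmWb_compl, symmWb, symmWb, Finset.sum_mul_sum]
        rfl
    _ = _ := by
        simp_rw [sum_range_ite_card_eq_succ, Finset.sum_ite, Finset.sum_const_zero, add_zero]

end Symmetrization

theorem symmWb_eq_Tb {A : Type*} [NonUnitalNonAssocSemiring A] (n : ℕ) {α : Type*} [Fintype α]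
    [DecidableEq α] (v : α → A) (e : Fin n ≃ α) : symmWb v n = Tb (fun a b => a * b + b * a) (List.ofFn (v ∘ e)) := by
  induction n using Nat.strong_induction_on generalizing α with
  | _ n ih =>
  match n, e with
  | 0, e => simp [symmWb, Wb, Tb, wb, tb]
  | 1, e =>
    have : Subsingleton (Fin 1 ≃ α) :=
      ⟨fun e₁ e₂ => Equiv.ext fun x => e.symm.injective (Subsingleton.elim _ _)⟩
    rw [symmWb, Fintype.sum_subsingleton _ e]
    rfl
  | m + 2, e =>
    have hcard : Fintype.card α = m + 2 := by simpa using (Fintype.card_congr e).symm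
    have hsub : ∀ J : Finset (Fin (m + 2)), J.card < m + 2 →
        Tb (fun a b => a * b + b * a) (List.ofFn ((v ∘ e) ∘ J.orderEmbOfFin rfl)) =
          symmWbOn v (J.map e.toEmbedding) := fun J hJ => by
      rw [symmWbOn, Finset.card_map, ih _ hJ _ ((J.orderIsoOfFin rfl).toEquiv.trans
        (e.subtypeEquiv fun a => (Finset.mem_map' e.toEmbedding).symm))]
      rfl
    calc symmWb v (m + 2)
        = ∑ I ∈ Finset.univ.filter (fun I : Finset α => I ≠ ∅ ∧ I ≠ Finset.univ),
            symmWbOn v I * symmWbOn v Iᶜ := by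
          rw [← hcard]
          exact symmWb_eq_sum_mul v (by omega)
      _ = ∑ I ∈ Finset.univ.filter (fun I : Finset α => e 0 ∈ I ∧ I ≠ Finset.univ),
            (symmWbOn v I * symmWbOn v Iᶜ + symmWbOn v Iᶜ * symmWbOn v I) := by
          rw [← Finset.sum_filter_mem_add_compl (e 0)]
          simp only [compl_compl]
      _ = ∑ J ∈ Finset.univ.filter (fun J : Finset (Fin (m + 2)) => 0 ∈ J ∧ J ≠ Finset.univ),
            (symmWbOn v (J.map e.toEmbedding) * symmWbOn v (Jᶜ.map e.toEmbedding) +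
              symmWbOn v (Jᶜ.map e.toEmbedding) * symmWbOn v (J.map e.toEmbedding)) :=
          Equiv.sum_filter_mem_map e 0 fun I I' => symmWbOn v I * symmWbOn v I' +
            symmWbOn v I' * symmWbOn v I
      _ = Tb (fun a b => a * b + b * a) (List.ofFn (v ∘ e)) := by
          rw [Tb_ofFn]
          refine Finset.sum_congr rfl fun J hJ => ?_
          simp only [Finset.mem_filter, Finset.mem_univ, true_and] at hJ
          have hJ₁ : J.card < m + 2 := by simpa using (Finset.card_lt_iff_ne_univ J).2 hJ.2
          have hJ₂ : Jᶜ.card < m + 2 := by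
            simpa using (Finset.card_lt_iff_ne_univ Jᶜ).2
              (by simpa using Finset.ne_empty_of_mem hJ.1)
          rw [hsub J hJ₁, hsub Jᶜ hJ₂]

theorem symmetrized_td_of_wd_general {A : Type*} [NonUnitalNonAssocRing A] (d : ℕ)
    (h : ∀ l : List A, l.length = d → Wb (· * ·) l = 0) :
    ∀ l : List A, l.length = d → Tb (fun a b => a * b + b * a) l = 0 := by
  intro l hl
  have hsym := symmWb_eq_Tb l.length l.get (Equiv.refl _)
  rw [Equiv.coe_refl, Function.comp_id, List.ofFn_get] at hsym
  rw [← hsym, symmWb]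
  exact Finset.sum_eq_zero fun e _ => h _ (by simp [hl])

/-- If an algebra over `ℚ` satisfies the identity `w_d = 0` (the sum of all
bracketings of the ordered word `a₁⋯a_d` vanishes), then the symmetrized product
`a∘b = ab + ba` satisfies the identity `t_d = 0` (the sum of all distinct
multilinear degree-`d` monomials of the commutative magma `∘` vanishes). -/
theorem symmetrized_td_of_wd {A : Type*} [NonUnitalNonAssocRing A]
    [Module ℚ A] [SMulCommClass ℚ A A] [IsScalarTower ℚ A A] (d : ℕ)
    (h : ∀ l : List A, l.length = d → Wb (· * ·) l = 0) :
    ∀ l : List A, l.length = d → Tb (fun a b => a * b + b * a) l = 0 :=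
  symmetrized_td_of_wd_general d h
end

section
/- Let A be an algebra with bilinear product satisfying both w_4 = 0 and w_5 = 0, where w_n is the sum of all bracketings of the ordered word a_1···a_n. Then w_6 = 0 holds in A, and consequently w_d = 0 for all d ≥ 4. -/
private lemma wb_cons_cons {A : Type*} [AddCommMonoid A] (f : A → A → A) (m : ℕ) (a b : A)
    (t : List A) :
    wb f (m + 1) (a :: b :: t) =
      ∑ i ∈ Finset.range ((a :: b :: t).length - 1),
        f (wb f m ((a :: b :: t).take (i + 1))) (wb f m ((a :: b :: t).drop (i + 1))) := rfl

private lemma wb_eq_len {A : Type*} [AddCommMonoid A] (f : A → A → A) :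
    ∀ (m : ℕ) (l : List A), l.length ≤ m → wb f m l = wb f l.length l := by
  intro m
  induction m using Nat.strong_induction_on with
  | _ m IH =>
    intro l hl
    match m, l with
    | 0, [] => rfl
    | m + 1, [] => simp [wb]
    | m + 1, [a] => rfl
    | m + 1, a :: b :: t =>
      have hlen : (a :: b :: t).length = t.length + 1 + 1 := by simp
      rw [wb_cons_cons, hlen, wb_cons_cons]
      apply Finset.sum_congr rfl
      intro i hi
      simp only [Finset.mem_range] at hi
      have h1 : ((a :: b :: t).take (i+1)).length ≤ m := by
        simp only [List.length_take, List.length_cons] at *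
        omega
      have h2 : ((a :: b :: t).drop (i+1)).length ≤ m := by
        simp only [List.length_drop, List.length_cons] at *
        omega
      have hm : (a :: b :: t).length ≤ m + 1 := hl
      have hm' : t.length + 1 < m + 1 := by simp at hm; omega
      have e1 : ((a :: b :: t).take (i+1)).length ≤ t.length + 1 := by
        simp only [List.length_take, List.length_cons]; omega
      have e2 : ((a :: b :: t).drop (i+1)).length ≤ t.length + 1 := by
        simp only [List.length_drop, List.length_cons]; omega
      rw [IH m (by omega) _ h1, IH m (by omega) _ h2,
          IH (t.length + 1) hm' _ e1, IH (t.length + 1) hm' _ e2]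

private lemma Wb_recur {A : Type*} [AddCommMonoid A] (f : A → A → A) (l : List A)
    (h : 2 ≤ l.length) :
    Wb f l = ∑ i ∈ Finset.range (l.length - 1),
        f (Wb f (l.take (i + 1))) (Wb f (l.drop (i + 1))) := by
  match l, h with
  | a :: b :: t, _ =>
    show wb f ((a :: b :: t).length) _ = _
    have hlen : (a :: b :: t).length = t.length + 1 + 1 := by simp
    rw [hlen, wb_cons_cons]
    apply Finset.sum_congr (by simp [hlen])
    intro i hi
    simp only [Finset.mem_range] at hi
    have e1 : ((a :: b :: t).take (i+1)).length ≤ t.length + 1 := by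
      simp only [List.length_take, List.length_cons]; omega
    have e2 : ((a :: b :: t).drop (i+1)).length ≤ t.length + 1 := by
      simp only [List.length_drop, List.length_cons]; omega
    rw [wb_eq_len f (t.length + 1) _ e1, wb_eq_len f (t.length + 1) _ e2]
    rfl

set_option maxHeartbeats 3200000 in
/-- If an algebra satisfies both `w₄ = 0` and `w₅ = 0`, then `w₆ = 0` holds in it,
and consequently `w_d = 0` for all `d ≥ 4`: weak nilpotence of index `4`. -/
theorem weakly_nilpotent_four_of_w4_w5 {A : Type*} [NonUnitalNonAssocRing A]
    (h4 : ∀ l : List A, l.length = 4 → Wb (· * ·) l = 0)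
    (h5 : ∀ l : List A, l.length = 5 → Wb (· * ·) l = 0) :
    (∀ l : List A, l.length = 6 → Wb (· * ·) l = 0) ∧
    (∀ d, 4 ≤ d → ∀ l : List A, l.length = d → Wb (· * ·) l = 0) := by
  have hw4 : ∀ a b c d : A,
      a * (b * (c * d) + b * c * d) + a * b * (c * d) + (a * (b * c) + a * b * c) * d = 0 := by
    intro a b c d
    simpa [Wb, wb, Finset.sum_range_succ] using h4 [a,b,c,d] rfl
  have hw5 : ∀ a b c d e : A,
      a * (b * (c * (d * e) + c * d * e) + b * c * (d * e) + (b * (c * d) + b * c * d) * e) + a * b * (c * (d * e) + c * d * e) + (a * (b * c) + a * b * c) * (d * e) + (a * (b * (c * d) + b * c * d) + a * b * (c * d) + (a * (b * c) + a * b * c) * d) * e = 0 := by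
    intro a b c d e
    simpa [Wb, wb, Finset.sum_range_succ] using h5 [a,b,c,d,e] rfl
  have h6 : ∀ l : List A, l.length = 6 → Wb (· * ·) l = 0 := by
    intro l hl
    match l, hl with
    | [a,b,c,d,e,f], _ =>
      have key : Wb (· * ·) [a,b,c,d,e,f] =
  (-11 : ℤ) • (((a * b) * c) * ((d * (e * f)) + ((d * e) * f)) + (((a * b) * c) * d) * (e * f) + (((a * b) * c) * (d * e) + (((a * b) * c) * d) * e) * f) +
  (-11 : ℤ) • ((a * (b * c)) * ((d * (e * f)) + ((d * e) * f)) + ((a * (b * c)) * d) * (e * f) + ((a * (b * c)) * (d * e) + ((a * (b * c)) * d) * e) * f) +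
  (-15 : ℤ) • ((a * b) * (((c * d) * (e * f)) + (((c * d) * e) * f)) + ((a * b) * (c * d)) * (e * f) + ((a * b) * ((c * d) * e) + ((a * b) * (c * d)) * e) * f) +
  (-15 : ℤ) • ((a * b) * ((c * ((d * e) * f)) + ((c * (d * e)) * f)) + ((a * b) * c) * ((d * e) * f) + ((a * b) * (c * (d * e)) + ((a * b) * c) * (d * e)) * f) +
  (-15 : ℤ) • ((a * b) * ((c * (d * (e * f))) + ((c * d) * (e * f))) + ((a * b) * c) * (d * (e * f)) + ((a * b) * (c * d) + ((a * b) * c) * d) * (e * f)) +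
  (-15 : ℤ) • (((a * b) * ((c * (d * e)) + ((c * d) * e)) + ((a * b) * c) * (d * e) + ((a * b) * (c * d) + ((a * b) * c) * d) * e) * f) +
  (-15 : ℤ) • (a * ((b * c) * ((d * (e * f)) + ((d * e) * f)) + ((b * c) * d) * (e * f) + ((b * c) * (d * e) + ((b * c) * d) * e) * f)) +
  (-11 : ℤ) • (a * ((((b * c) * d) * (e * f)) + ((((b * c) * d) * e) * f)) + (a * ((b * c) * d)) * (e * f) + (a * (((b * c) * d) * e) + (a * ((b * c) * d)) * e) * f) +
  (-11 : ℤ) • (a * (((b * (c * d)) * (e * f)) + (((b * (c * d)) * e) * f)) + (a * (b * (c * d))) * (e * f) + (a * ((b * (c * d)) * e) + (a * (b * (c * d))) * e) * f) +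
  (-15 : ℤ) • (a * (((b * c) * ((d * e) * f)) + (((b * c) * (d * e)) * f)) + (a * (b * c)) * ((d * e) * f) + (a * ((b * c) * (d * e)) + (a * (b * c)) * (d * e)) * f) +
  (-15 : ℤ) • (a * (((b * c) * (d * (e * f))) + (((b * c) * d) * (e * f))) + (a * (b * c)) * (d * (e * f)) + (a * ((b * c) * d) + (a * (b * c)) * d) * (e * f)) +
  (-15 : ℤ) • ((a * (((b * c) * (d * e)) + (((b * c) * d) * e)) + (a * (b * c)) * (d * e) + (a * ((b * c) * d) + (a * (b * c)) * d) * e) * f) +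
  (-11 : ℤ) • (a * ((b * (((c * d) * e) * f)) + ((b * ((c * d) * e)) * f)) + (a * b) * (((c * d) * e) * f) + (a * (b * ((c * d) * e)) + (a * b) * ((c * d) * e)) * f) +
  (-11 : ℤ) • (a * ((b * ((c * (d * e)) * f)) + ((b * (c * (d * e))) * f)) + (a * b) * ((c * (d * e)) * f) + (a * (b * (c * (d * e))) + (a * b) * (c * (d * e))) * f) +
  (-15 : ℤ) • (a * ((b * ((c * d) * (e * f))) + ((b * (c * d)) * (e * f))) + (a * b) * ((c * d) * (e * f)) + (a * (b * (c * d)) + (a * b) * (c * d)) * (e * f)) +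
  (-15 : ℤ) • ((a * ((b * ((c * d) * e)) + ((b * (c * d)) * e)) + (a * b) * ((c * d) * e) + (a * (b * (c * d)) + (a * b) * (c * d)) * e) * f) +
  (-11 : ℤ) • (a * ((b * (c * ((d * e) * f))) + ((b * c) * ((d * e) * f))) + (a * b) * (c * ((d * e) * f)) + (a * (b * c) + (a * b) * c) * ((d * e) * f)) +
  (-11 : ℤ) • (a * ((b * (c * (d * (e * f)))) + ((b * c) * (d * (e * f)))) + (a * b) * (c * (d * (e * f))) + (a * (b * c) + (a * b) * c) * (d * (e * f))) +
  (-15 : ℤ) • ((a * ((b * (c * (d * e))) + ((b * c) * (d * e))) + (a * b) * (c * (d * e)) + (a * (b * c) + (a * b) * c) * (d * e)) * f) +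
  (-11 : ℤ) • ((a * ((b * (c * d)) + ((b * c) * d)) + (a * b) * (c * d) + (a * (b * c) + (a * b) * c) * d) * (e * f)) +
  (-11 : ℤ) • (((a * ((b * (c * d)) + ((b * c) * d)) + (a * b) * (c * d) + (a * (b * c) + (a * b) * c) * d) * e) * f) +
  (-15 : ℤ) • (a * (b * (((c * d) * (e * f)) + (((c * d) * e) * f)) + (b * (c * d)) * (e * f) + (b * ((c * d) * e) + (b * (c * d)) * e) * f)) +
  (-15 : ℤ) • (a * (b * ((c * ((d * e) * f)) + ((c * (d * e)) * f)) + (b * c) * ((d * e) * f) + (b * (c * (d * e)) + (b * c) * (d * e)) * f)) +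
  (-15 : ℤ) • (a * (b * ((c * (d * (e * f))) + ((c * d) * (e * f))) + (b * c) * (d * (e * f)) + (b * (c * d) + (b * c) * d) * (e * f))) +
  (-11 : ℤ) • ((a * (b * ((c * (d * e)) + ((c * d) * e)) + (b * c) * (d * e) + (b * (c * d) + (b * c) * d) * e)) * f) +
  (-11 : ℤ) • (a * ((b * ((c * (d * e)) + ((c * d) * e)) + (b * c) * (d * e) + (b * (c * d) + (b * c) * d) * e) * f)) +
  (-11 : ℤ) • ((a * b) * (c * ((d * (e * f)) + ((d * e) * f)) + (c * d) * (e * f) + (c * (d * e) + (c * d) * e) * f)) +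
  (-11 : ℤ) • (a * (b * (c * ((d * (e * f)) + ((d * e) * f)) + (c * d) * (e * f) + (c * (d * e) + (c * d) * e) * f))) +
  (19 : ℤ) • ((a * b) * ((c * ((d * (e * f)) + ((d * e) * f))) + ((c * d) * (e * f)) + ((c * (d * e) + (c * d) * e) * f)) + ((a * b) * c) * ((d * (e * f)) + ((d * e) * f)) + ((a * b) * (c * d) + ((a * b) * c) * d) * (e * f) + ((a * b) * ((c * (d * e)) + ((c * d) * e)) + ((a * b) * c) * (d * e) + ((a * b) * (c * d) + ((a * b) * c) * d) * e) * f) +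
  (19 : ℤ) • (a * (((b * c) * ((d * (e * f)) + ((d * e) * f))) + (((b * c) * d) * (e * f)) + (((b * c) * (d * e) + ((b * c) * d) * e) * f)) + (a * (b * c)) * ((d * (e * f)) + ((d * e) * f)) + (a * ((b * c) * d) + (a * (b * c)) * d) * (e * f) + (a * (((b * c) * (d * e)) + (((b * c) * d) * e)) + (a * (b * c)) * (d * e) + (a * ((b * c) * d) + (a * (b * c)) * d) * e) * f) +
  (19 : ℤ) • (a * ((b * (((c * d) * (e * f)) + (((c * d) * e) * f))) + ((b * (c * d)) * (e * f)) + ((b * ((c * d) * e) + (b * (c * d)) * e) * f)) + (a * b) * (((c * d) * (e * f)) + (((c * d) * e) * f)) + (a * (b * (c * d)) + (a * b) * (c * d)) * (e * f) + (a * ((b * ((c * d) * e)) + ((b * (c * d)) * e)) + (a * b) * ((c * d) * e) + (a * (b * (c * d)) + (a * b) * (c * d)) * e) * f) +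
  (19 : ℤ) • (a * ((b * ((c * ((d * e) * f)) + ((c * (d * e)) * f))) + ((b * c) * ((d * e) * f)) + ((b * (c * (d * e)) + (b * c) * (d * e)) * f)) + (a * b) * ((c * ((d * e) * f)) + ((c * (d * e)) * f)) + (a * (b * c) + (a * b) * c) * ((d * e) * f) + (a * ((b * (c * (d * e))) + ((b * c) * (d * e))) + (a * b) * (c * (d * e)) + (a * (b * c) + (a * b) * c) * (d * e)) * f) +
  (19 : ℤ) • (a * ((b * ((c * (d * (e * f))) + ((c * d) * (e * f)))) + ((b * c) * (d * (e * f))) + ((b * (c * d) + (b * c) * d) * (e * f))) + (a * b) * ((c * (d * (e * f))) + ((c * d) * (e * f))) + (a * (b * c) + (a * b) * c) * (d * (e * f)) + (a * ((b * (c * d)) + ((b * c) * d)) + (a * b) * (c * d) + (a * (b * c) + (a * b) * c) * d) * (e * f)) +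
  (19 : ℤ) • ((a * ((b * ((c * (d * e)) + ((c * d) * e))) + ((b * c) * (d * e)) + ((b * (c * d) + (b * c) * d) * e)) + (a * b) * ((c * (d * e)) + ((c * d) * e)) + (a * (b * c) + (a * b) * c) * (d * e) + (a * ((b * (c * d)) + ((b * c) * d)) + (a * b) * (c * d) + (a * (b * c) + (a * b) * c) * d) * e) * f) +
  (19 : ℤ) • (a * (b * ((c * ((d * (e * f)) + ((d * e) * f))) + ((c * d) * (e * f)) + ((c * (d * e) + (c * d) * e) * f)) + (b * c) * ((d * (e * f)) + ((d * e) * f)) + (b * (c * d) + (b * c) * d) * (e * f) + (b * ((c * (d * e)) + ((c * d) * e)) + (b * c) * (d * e) + (b * (c * d) + (b * c) * d) * e) * f))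
          := by
        simp [Wb, wb, Finset.sum_range_succ, mul_add, add_mul]
        abel
      rw [key]
      simp only [hw5]
      simp only [hw4]
      simp
  refine ⟨h6, ?_⟩
  intro d
  induction d using Nat.strong_induction_on with
  | _ d IH =>
    intro hd l hl
    rcases (by omega : d = 4 ∨ d = 5 ∨ d = 6 ∨ 7 ≤ d) with h | h | h | h
    · exact h4 l (h ▸ hl)
    · exact h5 l (h ▸ hl)
    · exact h6 l (h ▸ hl)
    · rw [Wb_recur (· * ·) l (by omega)]
      apply Finset.sum_eq_zero
      intro i hi
      simp only [Finset.mem_range] at hi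
      have hlt : (l.take (i+1)).length = i + 1 := by
        simp only [List.length_take]; omega
      have hld : (l.drop (i+1)).length = d - (i+1) := by
        simp only [List.length_drop, hl]
      show Wb (· * ·) (l.take (i+1)) * Wb (· * ·) (l.drop (i+1)) = 0
      by_cases hc : 4 ≤ i + 1
      · rw [IH (i+1) (by omega) hc _ hlt, zero_mul]
      · rw [IH (d - (i+1)) (by omega) (by omega) _ hld, mul_zero]
end
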